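/- arXiv:1404.6928 — 2 statements merged into one kernel-verified Lean document; each statement's English description precedes it below -/
import Mathlib

section
/- For every integer n ≥ 2, the operator Ω defined on bounded measurable functions F : [0,1] → ℝ by ΩF(x) = n·x^(n-1) − (n−1)·x^n − 2n(n−1)·∫_{max(2x−1,0)}^{x} y^(n−2) · ( ∫₀^{(1+y)/2 − x} F(z) dz ) dy is a contraction in the supremum norm with contraction constant ((n−1)/n)^(n−1): for all bounded measurable F₁, F₂ : [0,1] → ℝ and all x ∈ [0,1], |ΩF₁(x) − ΩF₂(x)| ≤ ((n−1)/n)^(n−1) · sup_{z ∈ [0,1]} |F₁(z) − F₂(z)|. -/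
/-!
Only the double integral depends on `F`, and it is linear in `F`. If `|F₁ - F₂| ≤ M` on `[0, 1]`,
the inner integral of `F₁ - F₂` runs over an interval of length `(1 + y)/2 - x ≤ (1 - x)/2`, and
`∫ y^(n-2)` over `[max (2x - 1) 0, x]` is at most `x^(n-1)/(n-1)`; hence
`|ΩF₁(x) - ΩF₂(x)| ≤ n x^(n-1) (1 - x) M`. The polynomial `n x^(n-1) (1 - x)` attains its maximum
`((n-1)/n)^(n-1)` on `[0, 1]` at `x = (n-1)/n`.
-/

open Set MeasureTheory intervalIntegral

/-- Bernoulli's inequality at `u = (m+1) x / m`. -/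
lemma succ_mul_pow_mul_one_sub_le (m : ℕ) {x : ℝ} (hx : 0 ≤ x) :
    (m + 1) * x ^ m * (1 - x) ≤ (m / (m + 1)) ^ m := by
  rcases m with _ | k
  · simpa using hx
  push_cast
  set u : ℝ := (k + 2) * x / (k + 1) with hu_def
  have hu : 0 ≤ u := by positivity
  have hbern : u ^ (k + 1) + (k + 1) * u ^ k * (1 - u) ≤ 1 := by
    simpa using pow_add_mul_le_add_pow hu (by linarith : 0 ≤ 2 * u + (1 - u)) (k + 1)
  have hx_eq : x = (k + 1) / (k + 2) * u := by rw [hu_def]; field_simp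
  calc (k + 1 + 1) * x ^ (k + 1) * (1 - x)
      = ((k + 1) / (k + 2)) ^ (k + 1) * (u ^ k * (u * (1 + (k + 1) * (1 - u)))) := by
        rw [hx_eq, mul_pow, pow_succ u k]; field_simp; ring
    _ ≤ ((k + 1) / (k + 2)) ^ (k + 1) * (u ^ k * (u + (k + 1) * (1 - u))) := by
        gcongr; nlinarith [sq_nonneg (1 - u)]
    _ = ((k + 1) / (k + 2)) ^ (k + 1) * (u ^ (k + 1) + (k + 1) * u ^ k * (1 - u)) := by ring
    _ ≤ ((k + 1) / (k + 1 + 1)) ^ (k + 1) := by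
        rw [show (k:ℝ) + 1 + 1 = k + 2 by ring]
        exact mul_le_of_le_one_right (by positivity) hbern

noncomputable def sojournIntegral (n : ℕ) (F : ℝ → ℝ) (x : ℝ) : ℝ :=
  ∫ y in (max (2*x - 1) 0)..x, y ^ (n-2) * ∫ z in (0:ℝ)..((1 + y)/2 - x), F z

noncomputable def sojournOperator (n : ℕ) (F : ℝ → ℝ) (x : ℝ) : ℝ :=
  (n:ℝ) * x ^ (n-1) - ((n:ℝ) - 1) * x ^ n - 2 * (n:ℝ) * ((n:ℝ) - 1) * sojournIntegral n F x

lemma integrableOn_Icc_of_abs_le {F : ℝ → ℝ} {a b C : ℝ} (hF : Measurable F)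
    (hC : ∀ z ∈ Icc a b, |F z| ≤ C) : IntegrableOn F (Icc a b) :=
  Measure.integrableOn_of_bounded measure_Icc_lt_top.ne hF.aestronglyMeasurable
    ((ae_restrict_iff' measurableSet_Icc).2 (.of_forall fun z hz => by simpa using hC z hz))

lemma one_add_div_two_sub_mem_Icc {x y : ℝ} (hy : y ∈ Icc (max (2*x - 1) 0) x) :
    (1 + y)/2 - x ∈ Icc 0 ((1 - x)/2) := by
  obtain ⟨hy₁, hy₂⟩ := hy
  have := (max_le_iff.1 hy₁).1
  constructor <;> linarith

section
variable {n : ℕ} {x : ℝ}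

lemma continuousOn_sojournIntegrand {F : ℝ → ℝ} (hF : IntegrableOn F (Icc 0 1))
    (hx : x ∈ Icc (0:ℝ) 1) :
    ContinuousOn (fun y => y ^ (n-2) * ∫ z in (0:ℝ)..((1 + y)/2 - x), F z)
      (Icc (max (2*x - 1) 0) x) := by
  have hprim : ContinuousOn (fun t => ∫ z in (0:ℝ)..t, F z) (Icc 0 1) := by
    have := continuousOn_primitive_interval (μ := volume) (a := 0) (b := 1) (f := F)
      (by rwa [uIcc_of_le zero_le_one])
    rwa [uIcc_of_le zero_le_one] at this
  refine (continuousOn_pow _).mul (hprim.comp (by fun_prop) fun y hy => ?_)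
  obtain ⟨hc₀, hc₁⟩ := one_add_div_two_sub_mem_Icc hy
  exact ⟨hc₀, by linarith [hx.1]⟩

lemma sojournIntegral_sub {F₁ F₂ : ℝ → ℝ} (hF₁ : IntegrableOn F₁ (Icc 0 1))
    (hF₂ : IntegrableOn F₂ (Icc 0 1)) (hx : x ∈ Icc (0:ℝ) 1) :
    sojournIntegral n F₁ x - sojournIntegral n F₂ x = sojournIntegral n (F₁ - F₂) x := by
  have hax : max (2*x - 1) 0 ≤ x := max_le (by linarith [hx.2]) hx.1
  have hII : ∀ F : ℝ → ℝ, IntegrableOn F (Icc 0 1) → IntervalIntegrable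
      (fun y => y ^ (n-2) * ∫ z in (0:ℝ)..((1 + y)/2 - x), F z) volume (max (2*x - 1) 0) x :=
    fun F hF => (continuousOn_sojournIntegrand hF hx).intervalIntegrable_of_Icc hax
  unfold sojournIntegral
  rw [← integral_sub (hII F₁ hF₁) (hII F₂ hF₂)]
  refine integral_congr fun y hy => ?_
  rw [uIcc_of_le hax] at hy
  obtain ⟨hc₀, hc₁⟩ := one_add_div_two_sub_mem_Icc hy
  have hsub : Icc 0 ((1 + y)/2 - x) ⊆ Icc 0 1 := Icc_subset_Icc le_rfl (by linarith [hx.1])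
  have hI : ∀ F : ℝ → ℝ, IntegrableOn F (Icc 0 1) →
      IntervalIntegrable F volume 0 ((1 + y)/2 - x) := fun F hF =>
    (hF.mono_set ((uIcc_of_le hc₀).trans_subset hsub)).intervalIntegrable
  simp only [Pi.sub_apply, integral_sub (hI F₁ hF₁) (hI F₂ hF₂), mul_sub]

lemma abs_sojournIntegral_le (hn : 2 ≤ n) (hx : x ∈ Icc (0:ℝ) 1) {G : ℝ → ℝ} {M : ℝ}
    (hG : ∀ z ∈ Icc (0:ℝ) 1, |G z| ≤ M) :
    |sojournIntegral n G x| ≤ M * (1 - x) * x ^ (n-1) / (2 * ((n:ℝ) - 1)) := by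
  obtain ⟨k, rfl⟩ := Nat.exists_eq_add_of_le' hn
  have hM : 0 ≤ M := (abs_nonneg _).trans (hG 0 ⟨le_rfl, zero_le_one⟩)
  set a := max (2*x - 1) 0
  have ha : 0 ≤ a := le_max_right _ _
  have hax : a ≤ x := max_le (by linarith [hx.2]) hx.1
  have hinner : ∀ y ∈ Icc a x, |∫ z in (0:ℝ)..((1 + y)/2 - x), G z| ≤ M * ((1 - x)/2) := by
    intro y hy
    obtain ⟨hc₀, hc₁⟩ := one_add_div_two_sub_mem_Icc hy
    have hGy : ∀ z ∈ uIoc 0 ((1 + y)/2 - x), ‖G z‖ ≤ M := fun z hz => by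
      rw [uIoc_of_le hc₀] at hz
      exact hG z ⟨hz.1.le, by linarith [hz.2, hx.1]⟩
    calc |∫ z in (0:ℝ)..((1 + y)/2 - x), G z| ≤ M * |(1 + y)/2 - x - 0| :=
          intervalIntegral.norm_integral_le_of_norm_le_const hGy
      _ ≤ M * ((1 - x)/2) := by rw [sub_zero, abs_of_nonneg hc₀]; gcongr
  rw [sojournIntegral, Nat.add_sub_cancel]
  calc |∫ y in a..x, y ^ k * ∫ z in (0:ℝ)..((1 + y)/2 - x), G z|
      ≤ ∫ y in a..x, M * ((1 - x)/2) * y ^ k := by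
        rw [← Real.norm_eq_abs]
        refine norm_integral_le_of_norm_le hax (.of_forall fun y hy => ?_)
          ((by fun_prop : Continuous fun y : ℝ => M * ((1 - x)/2) * y ^ k).intervalIntegrable _ _)
        have hy' : y ∈ Icc a x := Ioc_subset_Icc_self hy
        rw [Real.norm_eq_abs, abs_mul, abs_of_nonneg (pow_nonneg (ha.trans hy'.1) k), mul_comm]
        exact mul_le_mul_of_nonneg_right (hinner y hy') (pow_nonneg (ha.trans hy'.1) k)
    _ = M * ((1 - x)/2) * ((x ^ (k + 1) - a ^ (k + 1)) / (k + 1)) := by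
        rw [intervalIntegral.integral_const_mul, integral_pow]
    _ ≤ M * ((1 - x)/2) * (x ^ (k + 1) / (k + 1)) := by
        gcongr
        · exact mul_nonneg hM (by linarith [hx.2])
        · linarith [pow_nonneg ha (k + 1)]
    _ = M * (1 - x) * x ^ (k + 2 - 1) / (2 * ((↑(k + 2) : ℝ) - 1)) := by
        rw [show k + 2 - 1 = k + 1 by omega]; push_cast
        rw [show (k:ℝ) + 2 - 1 = k + 1 by ring]; field_simp

lemma abs_sojournOperator_sub_le (hn : 2 ≤ n) (hx : x ∈ Icc (0:ℝ) 1) {F₁ F₂ : ℝ → ℝ} {M : ℝ}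
    (hF₁ : IntegrableOn F₁ (Icc 0 1)) (hF₂ : IntegrableOn F₂ (Icc 0 1))
    (hM : ∀ z ∈ Icc (0:ℝ) 1, |F₁ z - F₂ z| ≤ M) :
    |sojournOperator n F₁ x - sojournOperator n F₂ x| ≤ n * x ^ (n-1) * (1 - x) * M := by
  have hn' : (2:ℝ) ≤ n := by exact_mod_cast hn
  have hdiff : sojournOperator n F₁ x - sojournOperator n F₂ x
      = -(2 * n * ((n:ℝ) - 1) * sojournIntegral n (F₁ - F₂) x) := by
    rw [← sojournIntegral_sub hF₁ hF₂ hx]; unfold sojournOperator; ring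
  rw [hdiff, abs_neg, abs_mul, abs_of_nonneg (by nlinarith)]
  calc 2 * n * ((n:ℝ) - 1) * |sojournIntegral n (F₁ - F₂) x|
      ≤ 2 * n * ((n:ℝ) - 1) * (M * (1 - x) * x ^ (n-1) / (2 * ((n:ℝ) - 1))) := by
        gcongr
        · nlinarith
        · exact abs_sojournIntegral_le hn hx hM
    _ = n * x ^ (n-1) * (1 - x) * M := by
        field_simp [show (n:ℝ) - 1 ≠ 0 by linarith]
end

theorem stmt_6 (n : ℕ) (hn : 2 ≤ n)
    (F₁ F₂ : ℝ → ℝ) (hm₁ : Measurable F₁) (hm₂ : Measurable F₂)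
    (hb₁ : ∃ C : ℝ, ∀ x ∈ Icc (0:ℝ) 1, |F₁ x| ≤ C)
    (hb₂ : ∃ C : ℝ, ∀ x ∈ Icc (0:ℝ) 1, |F₂ x| ≤ C)
    (x : ℝ) (hx : x ∈ Icc (0:ℝ) 1) :
    |((n:ℝ) * x ^ (n-1) - ((n:ℝ) - 1) * x ^ n
        - 2 * (n:ℝ) * ((n:ℝ) - 1) *
          ∫ y in (max (2*x - 1) 0)..x, y ^ (n-2) * ∫ z in (0:ℝ)..((1 + y)/2 - x), F₁ z)
      - ((n:ℝ) * x ^ (n-1) - ((n:ℝ) - 1) * x ^ n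
        - 2 * (n:ℝ) * ((n:ℝ) - 1) *
          ∫ y in (max (2*x - 1) 0)..x, y ^ (n-2) * ∫ z in (0:ℝ)..((1 + y)/2 - x), F₂ z)|
      ≤ (((n:ℝ) - 1) / n) ^ (n-1) * sSup ((fun z => |F₁ z - F₂ z|) '' Icc (0:ℝ) 1) := by
  obtain ⟨C₁, hC₁⟩ := hb₁
  obtain ⟨C₂, hC₂⟩ := hb₂
  have hbdd : BddAbove ((fun z => |F₁ z - F₂ z|) '' Icc (0:ℝ) 1) := ⟨C₁ + C₂, by
    rintro _ ⟨z, hz, rfl⟩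
    exact (abs_sub _ _).trans (add_le_add (hC₁ z hz) (hC₂ z hz))⟩
  set M := sSup ((fun z => |F₁ z - F₂ z|) '' Icc (0:ℝ) 1)
  have hM : ∀ z ∈ Icc (0:ℝ) 1, |F₁ z - F₂ z| ≤ M := fun z hz => le_csSup hbdd ⟨z, hz, rfl⟩
  have hM₀ : 0 ≤ M := (abs_nonneg _).trans (hM 0 ⟨le_rfl, zero_le_one⟩)
  change |sojournOperator n F₁ x - sojournOperator n F₂ x| ≤ _
  calc _ ≤ n * x ^ (n-1) * (1 - x) * M :=
        abs_sojournOperator_sub_le hn hx (integrableOn_Icc_of_abs_le hm₁ hC₁)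
          (integrableOn_Icc_of_abs_le hm₂ hC₂) hM
    _ ≤ _ := by
        gcongr
        obtain ⟨m, rfl⟩ := Nat.exists_eq_add_of_le' (by omega : 1 ≤ n)
        simpa using succ_mul_pow_mul_one_sub_le m hx.1
end

section
/- Let n ≥ 3 be an integer and let t⁺ denote max(t,0). Define f_A(y) = n·y^(n−2)·( y + (n−1)(1−y) ) − n·((2y−1)⁺)^(n−2)·( 2(n−1)(1−y) + 2y − 1 ), F_A(x) = 2·x^n + n·x^(n−1)·(1−x) − ((2x−1)⁺)^n − n·((2x−1)⁺)^(n−1)·(1−x), and for y ∈ [0,1] and t ≥ 0 define G(t, y) = 2n(n−1)·y^(n−2)·t − n·((y−2t)⁺)^(n−1) + n·y^(n−1) − 4n(n−1)·((2y−1)⁺)^(n−2)·t if 0 ≤ t ≤ min((1−y)/2, 1/4); G(t, y) = 2n(n−1)·y^(n−2)·t + n·y^(n−1) if 1/4 ≤ t ≤ (1−y)/2; and G(t, y) = f_A(y) if t ≥ (1−y)/2. Let f : [0,1] → ℝ be a nonnegative integrable function with ∫₀¹ f(z) dz = 1 and let F(t) = ∫₀^t f(z) dz. Then for every x ∈ [0,1]: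 ∫₀^x ∫₀¹ G(x − y + z, y) · f(z) dz dy = F_A(x) − ∫_{max(2x−1,0)}^{x} ∫₀^{(1+y)/2 − x} 2n(n−1)·y^(n−2)·F(z) dz dy − ∫_{max( max(x−1/4,0), 2x−1 )}^{x} ∫₀^{min( 1/4 + y − x, (1+y)/2 − x )} 2n(n−1)·((3y − 2x − 2z)⁺)^(n−2)·F(z) dz dy + ∫_{max(1/2, 2x−1)}^{max(1/2, x)} ∫₀^{(1+y)/2 − x} 4n(n−1)·(2y−1)^(n−2)·F(z) dz dy. -/
/-!
For fixed `y`, the three regimes of `G(·, y)` glue into one continuous function of `t ≥ 0` whose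
right derivative is a sum of two step-shaped pieces. Integrating by parts against `f`, whose
primitive `F` has `F 0 = 0` and `F 1 = 1`, turns the inner integral into
`f_A(y) - ∫₀¹ ∂ₜG(x - y + z, y) F(z) dz`, and the steps of `∂ₜG` cut this into the three inner
integrals of the right-hand side. Integrating in `y` over `[0, x]` turns `f_A` into `F_A(x)`, and
the outer limits are exactly where the upper limits of the inner integrals are nonnegative.
-/

open Set MeasureTheory intervalIntegral

theorem hasDerivAt_max_zero_pow {m : ℕ} (hm : 2 ≤ m) (s : ℝ) :
    HasDerivAt (fun t : ℝ => max t 0 ^ m) (m * max s 0 ^ (m - 1)) s := by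
  have hm0 : ∀ k ≠ 0, (0 : ℝ) ^ k = 0 := fun k hk => zero_pow hk
  rcases lt_trichotomy s 0 with hs | rfl | hs
  · rw [max_eq_right hs.le, hm0 _ (by omega), mul_zero]
    refine (hasDerivAt_const s 0).congr_of_eventuallyEq ?_
    filter_upwards [Iio_mem_nhds hs] with t ht
    rw [max_eq_right (le_of_lt ht), hm0 _ (by omega)]
  · rw [max_self, hm0 _ (by omega), mul_zero, ← hasDerivWithinAt_univ, ← Iic_union_Ici (a := 0)]
    refine HasDerivWithinAt.union ?_ ?_
    · refine (hasDerivWithinAt_const 0 _ 0).congr (fun t ht => ?_) ?_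
      · rw [max_eq_right ht, hm0 _ (by omega)]
      · rw [max_self, hm0 _ (by omega)]
    · refine ((hasDerivAt_pow m 0).hasDerivWithinAt.congr (fun t ht => ?_) ?_).congr_deriv ?_
      · rw [max_eq_left ht]
      · rw [max_self]
      · rw [hm0 _ (by omega), mul_zero]
  · rw [max_eq_left hs.le]
    refine (hasDerivAt_pow m s).congr_of_eventuallyEq ?_
    filter_upwards [Ioi_mem_nhds hs] with t ht
    rw [max_eq_left (le_of_lt ht)]

theorem hasDerivWithinAt_Ioi_comp_min {h h' : ℝ → ℝ} (hh : ∀ s, HasDerivAt h (h' s) s) (c t : ℝ) :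
    HasDerivWithinAt (fun s => h (min s c)) (if t < c then h' t else 0) (Ioi t) t := by
  split_ifs with htc
  · refine ((hh t).congr_of_eventuallyEq ?_).hasDerivWithinAt
    filter_upwards [Iio_mem_nhds htc] with s hs
    rw [min_eq_left (le_of_lt hs)]
  · refine (hasDerivWithinAt_const t _ (h c)).congr (fun s hs => ?_) ?_
    · rw [min_eq_right ((not_lt.1 htc).trans (le_of_lt hs))]
    · rw [min_eq_right (not_lt.1 htc)]

theorem integral_ite_lt_eq {h : ℝ → ℝ} {a b c : ℝ} (hab : a ≤ b) (hcb : c ≤ b) :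
    ∫ w in a..b, (if w < c then h w else 0) = ∫ w in a..max c a, h w := by
  rw [intervalIntegral.integral_congr_ae (g := {w | w ≤ max c a}.indicator h),
    integral_indicator ⟨le_max_right c a, max_le hcb hab⟩]
  filter_upwards [Measure.ae_ne volume c] with w hwc hw
  rw [uIoc_of_le hab] at hw
  rcases lt_or_gt_of_ne hwc with hlt | hgt
  · simp [hlt, hlt.le]
  · simp [not_lt.2 hgt.le, hgt, hw.1]

theorem IntervalIntegrable.ite_lt {h : ℝ → ℝ} {a b : ℝ} (hh : IntervalIntegrable h volume a b)
    (c : ℝ) : IntervalIntegrable (fun w => if w < c then h w else 0) volume a b := by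
  have : (fun w => if w < c then h w else 0) = (Iio c).indicator h := by
    ext w; simp [indicator_apply]
  rw [this, intervalIntegrable_iff]
  exact (intervalIntegrable_iff.1 hh).indicator measurableSet_Iio

theorem integral_eq_integral_of_forall_Ioc_eq_zero {h : ℝ → ℝ} {a l b : ℝ} (hal : a ≤ l)
    (hlb : l ≤ b) (hint : IntervalIntegrable h volume a b) (h0 : ∀ y ∈ Ioc a l, h y = 0) :
    ∫ y in a..b, h y = ∫ y in l..b, h y := by
  have hl : l ∈ uIcc a b := by rw [uIcc_of_le (hal.trans hlb)]; exact ⟨hal, hlb⟩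
  rw [← integral_add_adjacent_intervals (hint.mono_set (uIcc_subset_uIcc_left hl))
      (hint.mono_set (uIcc_subset_uIcc_right hl)),
    integral_zero_ae (ae_of_all _ fun y hy => h0 y (by rwa [uIoc_of_le hal] at hy)), zero_add]

theorem integral_mul_eq_sub_integral_mul_primitive {u u' f : ℝ → ℝ} {a b : ℝ} (hab : a ≤ b)
    (hu : ContinuousOn u (Icc a b)) (hu' : ∀ t ∈ Ioo a b, HasDerivWithinAt u (u' t) (Ioi t) t)
    (hu'i : IntervalIntegrable u' volume a b) (hf : IntervalIntegrable f volume a b) :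
    ∫ t in a..b, u t * f t = u b * (∫ t in a..b, f t) - ∫ t in a..b, u' t * ∫ s in a..t, f s := by
  set P : ℝ → ℝ := fun t => ∫ s in a..t, u' s
  set F : ℝ → ℝ := fun t => ∫ s in a..t, f s
  have ha : a ∈ uIcc a b := left_mem_uIcc
  have hP : ∀ t ∈ uIcc a b, P t = u t - u a := fun t ht => by
    rw [uIcc_of_le hab] at ht
    exact integral_eq_sub_of_hasDeriv_right_of_le ht.1 (hu.mono (Icc_subset_Icc_right ht.2))
      (fun s hs => hu' s ⟨hs.1, hs.2.trans_le ht.2⟩)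
      (hu'i.mono_set (uIcc_subset_uIcc_left (by rwa [uIcc_of_le hab])))
  have hPac := hu'i.absolutelyContinuousOnInterval_intervalIntegral ha
  have hFac := hf.absolutelyContinuousOnInterval_intervalIntegral ha
  have hderivF : ∫ t in a..b, P t * deriv F t = ∫ t in a..b, P t * f t :=
    integral_congr_ae <| by
      filter_upwards [hf.ae_hasDerivAt_integral] with t ht ht'
      rw [(ht (uIoc_subset_uIcc ht') a ha).deriv]
  have hderivP : ∫ t in a..b, deriv P t * F t = ∫ t in a..b, u' t * F t :=
    integral_congr_ae <| by
      filter_upwards [hu'i.ae_hasDerivAt_integral] with t ht ht'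
      rw [(ht (uIoc_subset_uIcc ht') a ha).deriv]
  have hsplit : ∫ t in a..b, u t * f t = u a * F b + ∫ t in a..b, P t * f t := by
    rw [integral_congr fun t ht => by rw [show u t = u a + P t by rw [hP t ht]; ring, add_mul],
      integral_add (hf.const_mul _) (hf.continuousOn_mul hPac.continuousOn),
      intervalIntegral.integral_const_mul]
  rw [hsplit, ← hderivF, hPac.integral_mul_deriv_eq_deriv_mul hFac, hderivP,
    show (∫ s in a..b, u' s) = u b - u a from hP b right_mem_uIcc]
  simp only [F, integral_same, mul_zero, sub_zero]
  ring

theorem continuousOn_parametric_integral_mul {φ : ℝ → ℝ → ℝ}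
    (hφ : Continuous (Function.uncurry φ)) {F : ℝ → ℝ} {a b : ℝ} (hab : a ≤ b)
    (hF : ContinuousOn F (Icc a b)) {c : ℝ → ℝ} (hc : Continuous c) {s : Set ℝ}
    (hcs : MapsTo c s (Icc a b)) :
    ContinuousOn (fun y => ∫ z in a..c y, φ y z * F z) s := by
  -- `F` is only continuous on `[a, b]`; clamping extends it without changing the integrals.
  set clamp : ℝ → ℝ := fun z => max a (min z b)
  have hclamp : ∀ z ∈ Icc a b, clamp z = z := fun z hz => by
    simp [clamp, min_eq_left hz.2, max_eq_right hz.1]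
  have hFc : Continuous (F ∘ clamp) :=
    hF.comp_continuous (by fun_prop) fun z => ⟨le_max_left _ _, max_le hab (min_le_right _ _)⟩
  have hcont : Continuous fun y => ∫ z in a..c y, φ y z * F (clamp z) :=
    (continuous_parametric_primitive_of_continuous (μ := volume) (a₀ := a)
      (f := fun y z => φ y z * F (clamp z))
      (hφ.mul (hFc.comp continuous_snd))).comp (continuous_id.prodMk hc)
  refine hcont.continuousOn.congr fun y hy => integral_congr fun z hz => ?_
  have hz' : z ∈ Icc a b := by
    rw [uIcc_of_le (hcs hy).1] at hz
    exact ⟨hz.1, hz.2.trans (hcs hy).2⟩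
  simp [hclamp z hz']

namespace Carousel

variable (n : ℕ)

noncomputable def τ (y : ℝ) : ℝ := min ((1 - y) / 2) (1 / 4)

noncomputable def coefA (y : ℝ) : ℝ := 2 * (n : ℝ) * ((n : ℝ) - 1) * y ^ (n - 2)

noncomputable def coefB (y : ℝ) : ℝ :=
  4 * (n : ℝ) * ((n : ℝ) - 1) * max (2 * y - 1) 0 ^ (n - 2)

noncomputable def coefD (y s : ℝ) : ℝ :=
  2 * (n : ℝ) * ((n : ℝ) - 1) * max (y - 2 * s) 0 ^ (n - 2)

noncomputable def H (y s : ℝ) : ℝ :=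
  (n : ℝ) * y ^ (n - 1) - (n : ℝ) * max (y - 2 * s) 0 ^ (n - 1) - coefB n y * s

-- `G n y t` is `G(t, y)` for `t ≥ 0` in all three regimes: the clocks `min t (τ y)` and
-- `min t ((1 - y) / 2)` stop at the regime boundaries.
noncomputable def G (y t : ℝ) : ℝ := coefA n y * min t ((1 - y) / 2) + H n y (min t (τ y))

noncomputable def g (y t : ℝ) : ℝ :=
  (if t < (1 - y) / 2 then coefA n y else 0) + (if t < τ y then coefD n y t - coefB n y else 0)

noncomputable def fA (y : ℝ) : ℝ :=
  (n:ℝ) * y ^ (n-2) * (y + ((n:ℝ) - 1) * (1 - y))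
    - (n:ℝ) * (max (2*y - 1) 0) ^ (n-2) * (2 * ((n:ℝ) - 1) * (1 - y) + 2*y - 1)

noncomputable def FA (x : ℝ) : ℝ :=
  2 * x ^ n + (n:ℝ) * x ^ (n-1) * (1 - x)
    - (max (2*x - 1) 0) ^ n - (n:ℝ) * (max (2*x - 1) 0) ^ (n-1) * (1 - x)

-- The upper limits are clipped at `0`, so each term vanishes outside the outer range of
-- integration in the theorem.
noncomputable def termA (F : ℝ → ℝ) (x y : ℝ) : ℝ :=
  ∫ z in (0:ℝ)..max ((1 + y) / 2 - x) 0, coefA n y * F z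

noncomputable def termD (F : ℝ → ℝ) (x y : ℝ) : ℝ :=
  ∫ z in (0:ℝ)..max (τ y + y - x) 0, coefD n y (x - y + z) * F z

noncomputable def termB (F : ℝ → ℝ) (x y : ℝ) : ℝ :=
  ∫ z in (0:ℝ)..max (τ y + y - x) 0, coefB n y * F z

variable {n} {F : ℝ → ℝ}

theorem τ_le_quarter (y : ℝ) : τ y ≤ 1 / 4 := min_le_right _ _

theorem τ_le_one_sub_div_two (y : ℝ) : τ y ≤ (1 - y) / 2 := min_le_left _ _

theorem τ_add_sub (x y : ℝ) : τ y + y - x = min (1 / 4 + y - x) ((1 + y) / 2 - x) := by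
  rw [τ, min_comm, ← min_add_add_right, ← min_sub_sub_right]
  congr 1
  ring

theorem hasDerivAt_H (hn : 3 ≤ n) (y s : ℝ) :
    HasDerivAt (H n y) (coefD n y s - coefB n y) s := by
  have hpow := (hasDerivAt_max_zero_pow (m := n - 1) (by omega) (y - 2 * s)).comp s
    (((hasDerivAt_id s).const_mul 2).const_sub y)
  have : HasDerivAt (fun s => (n : ℝ) * y ^ (n - 1) - (n : ℝ) * max (y - 2 * s) 0 ^ (n - 1)
      - coefB n y * s) _ s :=
    ((hpow.const_mul (n : ℝ)).const_sub _).sub ((hasDerivAt_id s).const_mul (coefB n y))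
  refine this.congr_deriv ?_
  rw [Nat.cast_sub (by omega : 1 ≤ n), show n - 1 - 1 = n - 2 by omega, coefD]
  push_cast
  ring

theorem hasDerivWithinAt_G (hn : 3 ≤ n) (y t : ℝ) :
    HasDerivWithinAt (G n y) (g n y t) (Ioi t) t :=
  (hasDerivWithinAt_Ioi_comp_min (h := fun s => coefA n y * s) (h' := fun _ => coefA n y)
    (fun s => by simpa using (hasDerivAt_id s).const_mul (coefA n y)) ((1 - y) / 2) t).add
    (hasDerivWithinAt_Ioi_comp_min (hasDerivAt_H hn y) (τ y) t)

theorem continuous_G (y : ℝ) : Continuous (G n y) := by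
  unfold G H; fun_prop

theorem G_eq_of_le_τ {y t : ℝ} (ht : t ≤ τ y) :
    G n y t = 2 * (n:ℝ) * ((n:ℝ) - 1) * y ^ (n-2) * t
        - (n:ℝ) * (max (y - 2*t) 0) ^ (n-1) + (n:ℝ) * y ^ (n-1)
        - 4 * (n:ℝ) * ((n:ℝ) - 1) * (max (2*y - 1) 0) ^ (n-2) * t := by
  rw [G, min_eq_left ht, min_eq_left (ht.trans (min_le_left _ _)), H, coefA, coefB]
  ring

theorem G_eq_of_quarter_le (hn : 3 ≤ n) {y t : ℝ} (h₁ : 1 / 4 ≤ t) (h₂ : t ≤ (1 - y) / 2) :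
    G n y t = 2 * (n:ℝ) * ((n:ℝ) - 1) * y ^ (n-2) * t + (n:ℝ) * y ^ (n-1) := by
  have hτ : τ y = 1 / 4 := min_eq_right (h₁.trans h₂)
  rw [G, min_eq_left h₂, hτ, min_eq_right h₁, H, coefA, coefB,
    max_eq_right (by linarith), max_eq_right (by linarith), zero_pow (by omega),
    zero_pow (by omega)]
  ring

theorem G_eq_fA (hn : 3 ≤ n) {y t : ℝ} (ht : (1 - y) / 2 ≤ t) : G n y t = fA n y := by
  have hpow : ∀ u : ℝ, u ^ (n - 1) = u ^ (n - 2) * u := fun u => by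
    rw [← pow_succ]; congr 1; omega
  rw [G, min_eq_right ht, H, coefA, coefB, fA]
  rcases le_total y (1 / 2) with hy | hy
  · rw [show τ y = 1 / 4 from min_eq_right (by linarith), min_eq_right (by linarith),
      max_eq_right (by linarith), max_eq_right (by linarith), zero_pow (by omega),
      zero_pow (by omega), hpow]
    ring
  · rw [show τ y = (1 - y) / 2 from min_eq_left (by linarith), min_eq_right (by linarith),
      show y - 2 * ((1 - y) / 2) = 2 * y - 1 by ring, max_eq_left (by linarith), hpow, hpow]
    ring

theorem hasDerivAt_FA (hn : 3 ≤ n) (s : ℝ) : HasDerivAt (FA n) (fA n s) s := by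
  have haff : HasDerivAt (fun s : ℝ => 2 * s - 1) 2 s := by
    simpa using ((hasDerivAt_id s).const_mul (2 : ℝ)).sub_const 1
  have hp : ∀ m : ℕ, 2 ≤ m → HasDerivAt (fun s : ℝ => max (2 * s - 1) 0 ^ m)
      (m * max (2 * s - 1) 0 ^ (m - 1) * 2) s := fun m hm =>
    (hasDerivAt_max_zero_pow hm _).comp s haff
  have hq : HasDerivAt (fun s : ℝ => 1 - s) (-1) s := by
    simpa using (hasDerivAt_id s).const_sub (1 : ℝ)
  have : HasDerivAt (FA n) _ s := ((((hasDerivAt_pow n s).const_mul 2).add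
    (((hasDerivAt_pow (n - 1) s).const_mul (n : ℝ)).mul hq)).sub (hp n (by omega))).sub
    (((hp (n - 1) (by omega)).const_mul (n : ℝ)).mul hq)
  refine this.congr_deriv ?_
  obtain ⟨k, rfl⟩ : ∃ k, n = k + 3 := ⟨n - 3, by omega⟩
  simp only [fA, show k + 3 - 1 = k + 2 by omega, show k + 3 - 2 = k + 1 by omega,
    show k + 2 - 1 = k + 1 by omega]
  push_cast
  rcases le_total (2 * s - 1) 0 with h | h
  · rw [max_eq_right h]; ring
  · rw [max_eq_left h]; ring

theorem integral_fA (hn : 3 ≤ n) (x : ℝ) : ∫ y in (0:ℝ)..x, fA n y = FA n x := by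
  have hcont : Continuous (fA n) := by unfold fA; fun_prop
  rw [integral_eq_sub_of_hasDerivAt (fun s _ => hasDerivAt_FA hn s) (hcont.intervalIntegrable _ _)]
  simp [FA, zero_pow (by omega : n ≠ 0), zero_pow (by omega : n - 1 ≠ 0)]

theorem g_sub_add (x y w : ℝ) :
    g n y (x - y + w) = (if w < (1 + y) / 2 - x then coefA n y else 0)
      + (if w < τ y + y - x then coefD n y (x - y + w) - coefB n y else 0) := by
  have h₁ : x - y + w < (1 - y) / 2 ↔ w < (1 + y) / 2 - x := by
    constructor <;> intro <;> linarith
  have h₂ : x - y + w < τ y ↔ w < τ y + y - x := by constructor <;> intro <;> linarith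
  simp only [g, h₁, h₂]

theorem intervalIntegrable_g_sub_add (x y a b : ℝ) :
    IntervalIntegrable (fun w => g n y (x - y + w)) volume a b := by
  simp only [g_sub_add]
  exact (intervalIntegrable_const.ite_lt _).add
    ((Continuous.intervalIntegrable (by unfold coefD; fun_prop) _ _).ite_lt _)

theorem integral_g_sub_add_mul (hF : ContinuousOn F (Icc 0 1)) {x y : ℝ}
    (hy : 0 ≤ y) (hyx : y ≤ x) :
    ∫ w in (0:ℝ)..1, g n y (x - y + w) * F w = termA n F x y + termD n F x y - termB n F x y := by
  have hFi : IntervalIntegrable F volume 0 1 := hF.intervalIntegrable_of_Icc zero_le_one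
  have hA := (hFi.const_mul (coefA n y)).ite_lt ((1 + y) / 2 - x)
  have hD := (hFi.continuousOn_mul (g := fun w => coefD n y (x - y + w))
    (by unfold coefD; fun_prop)).ite_lt (τ y + y - x)
  have hB := (hFi.const_mul (coefB n y)).ite_lt (τ y + y - x)
  have hsplit : ∀ w, g n y (x - y + w) * F w
      = (if w < (1 + y) / 2 - x then coefA n y * F w else 0)
        + (if w < τ y + y - x then coefD n y (x - y + w) * F w else 0)
        - (if w < τ y + y - x then coefB n y * F w else 0) := fun w => by
    rw [g_sub_add]; split_ifs <;> ring
  have hτ := τ_le_quarter y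
  rw [integral_congr fun w _ => hsplit w, integral_sub (hA.add hD) hB, integral_add hA hD,
    integral_ite_lt_eq zero_le_one (by linarith), integral_ite_lt_eq zero_le_one (by linarith),
    integral_ite_lt_eq zero_le_one (by linarith)]
  rfl

theorem integral_G_sub_add_mul (hn : 3 ≤ n) {f : ℝ → ℝ} (hf : IntervalIntegrable f volume 0 1)
    (hf1 : ∫ z in (0:ℝ)..1, f z = 1) (hF : ∀ t, F t = ∫ s in (0:ℝ)..t, f s)
    (hFc : ContinuousOn F (Icc 0 1)) {x y : ℝ} (hy : 0 ≤ y) (hyx : y ≤ x) :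
    ∫ z in (0:ℝ)..1, G n y (x - y + z) * f z
      = fA n y - termA n F x y - termD n F x y + termB n F x y := by
  have hderiv : ∀ t, HasDerivWithinAt (fun z => G n y (x - y + z)) (g n y (x - y + t)) (Ioi t) t :=
    fun t => by
      have := (hasDerivWithinAt_G hn y (x - y + t)).scomp t
        ((hasDerivAt_id t).const_add (x - y)).hasDerivWithinAt
        fun z (hz : t < z) => show x - y + t < x - y + id z by simpa using hz
      rwa [one_smul] at this
  rw [integral_mul_eq_sub_integral_mul_primitive (u := fun z => G n y (x - y + z)) zero_le_one
      ((continuous_G y).comp (continuous_const_add (x - y))).continuousOn (fun t _ => hderiv t)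
      (intervalIntegrable_g_sub_add x y 0 1) hf,
    hf1, mul_one, G_eq_fA hn (by linarith)]
  simp only [← hF]
  rw [integral_g_sub_add_mul hFc hy hyx]
  ring

theorem continuousOn_termA (hF : ContinuousOn F (Icc 0 1)) (x : ℝ) :
    ContinuousOn (termA n F x) (Icc 0 x) :=
  continuousOn_parametric_integral_mul (φ := fun y _ => coefA n y) (by unfold coefA; fun_prop)
    zero_le_one hF (by fun_prop) fun y hy =>
      ⟨le_max_right _ _, max_le (by linarith [hy.1, hy.2]) zero_le_one⟩

theorem continuousOn_termD (hF : ContinuousOn F (Icc 0 1)) (x : ℝ) :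
    ContinuousOn (termD n F x) (Icc 0 x) :=
  continuousOn_parametric_integral_mul (φ := fun y z => coefD n y (x - y + z))
    (by unfold coefD; fun_prop) zero_le_one hF (by unfold τ; fun_prop) fun y hy =>
      ⟨le_max_right _ _, max_le (by linarith [hy.2, τ_le_quarter y]) zero_le_one⟩

theorem continuousOn_termB (hF : ContinuousOn F (Icc 0 1)) (x : ℝ) :
    ContinuousOn (termB n F x) (Icc 0 x) :=
  continuousOn_parametric_integral_mul (φ := fun y _ => coefB n y) (by unfold coefB; fun_prop)
    zero_le_one hF (by unfold τ; fun_prop) fun y hy =>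
      ⟨le_max_right _ _, max_le (by linarith [hy.2, τ_le_quarter y]) zero_le_one⟩

theorem integral_termA (hF : ContinuousOn F (Icc 0 1)) {x : ℝ} (hx : x ∈ Icc 0 1) :
    ∫ y in (0:ℝ)..x, termA n F x y
      = ∫ y in (max (2*x - 1) 0)..x, ∫ z in (0:ℝ)..((1 + y)/2 - x),
          2 * (n:ℝ) * ((n:ℝ) - 1) * y ^ (n-2) * F z := by
  have hl : max (2*x - 1) 0 ≤ x := max_le (by linarith [hx.2]) hx.1
  rw [integral_eq_integral_of_forall_Ioc_eq_zero (le_max_right _ _) hl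
    ((continuousOn_termA hF x).intervalIntegrable_of_Icc (μ := volume) hx.1)]
  · refine integral_congr fun y hy => ?_
    rw [uIcc_of_le hl] at hy
    rw [termA, max_eq_left (by linarith [le_max_left (2*x - 1) 0, hy.1])]
    rfl
  · intro y ⟨hy0, hyl⟩
    have : y ≤ 2*x - 1 := by simpa [hy0.not_ge] using hyl
    rw [termA, max_eq_right (by linarith), integral_same]

theorem integral_termD (hF : ContinuousOn F (Icc 0 1)) {x : ℝ} (hx : x ∈ Icc 0 1) :
    ∫ y in (0:ℝ)..x, termD n F x y
      = ∫ y in (max (max (x - 1/4) 0) (2*x - 1))..x,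
            ∫ z in (0:ℝ)..(min (1/4 + y - x) ((1 + y)/2 - x)),
              2 * (n:ℝ) * ((n:ℝ) - 1) * (max (3*y - 2*x - 2*z) 0) ^ (n-2) * F z := by
  have hl : max (max (x - 1/4) 0) (2*x - 1) ≤ x :=
    max_le (max_le (by linarith) hx.1) (by linarith [hx.2])
  rw [integral_eq_integral_of_forall_Ioc_eq_zero ((le_max_right _ _).trans (le_max_left _ _)) hl
    ((continuousOn_termD hF x).intervalIntegrable_of_Icc (μ := volume) hx.1)]
  · refine integral_congr fun y hy => ?_
    rw [uIcc_of_le hl] at hy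
    have h₁ : x - 1/4 ≤ y := (le_max_left _ _).trans ((le_max_left _ _).trans hy.1)
    have h₂ : 2*x - 1 ≤ y := (le_max_right _ _).trans hy.1
    rw [termD, τ_add_sub, max_eq_left (le_min (by linarith) (by linarith))]
    refine integral_congr fun z _ => ?_
    rw [coefD, show y - 2 * (x - y + z) = 3*y - 2*x - 2*z by ring]
  · intro y ⟨hy0, hyl⟩
    have : y ≤ x - 1/4 ∨ y ≤ 2*x - 1 := by simpa [hy0.not_ge] using hyl
    have : τ y + y - x ≤ 0 := by
      rcases this with h | h <;> linarith [τ_le_quarter y, τ_le_one_sub_div_two y]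
    rw [termD, max_eq_right this, integral_same]

theorem termB_eq_zero (hn : 3 ≤ n) (x : ℝ) {y : ℝ} (hy : y ≤ 1/2) : termB n F x y = 0 := by
  simp [termB, coefB, max_eq_right (show 2 * y - 1 ≤ 0 by linarith),
    zero_pow (by omega : n - 2 ≠ 0)]

theorem integral_termB (hn : 3 ≤ n) (hF : ContinuousOn F (Icc 0 1)) {x : ℝ}
    (hx : x ∈ Icc 0 1) :
    ∫ y in (0:ℝ)..x, termB n F x y
      = ∫ y in (max (1/2 : ℝ) (2*x - 1))..(max (1/2 : ℝ) x),
            ∫ z in (0:ℝ)..((1 + y)/2 - x),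
              4 * (n:ℝ) * ((n:ℝ) - 1) * (2*y - 1) ^ (n-2) * F z := by
  rcases le_total x (1/2) with hx2 | hx2
  · rw [max_eq_left (by linarith), max_eq_left hx2, integral_same,
      integral_congr fun y hy =>
        termB_eq_zero hn x (by rw [uIcc_of_le hx.1] at hy; linarith [hy.2]),
      intervalIntegral.integral_zero]
  have hl : max (1/2 : ℝ) (2*x - 1) ≤ x := max_le hx2 (by linarith [hx.2])
  rw [max_eq_right hx2, integral_eq_integral_of_forall_Ioc_eq_zero (by positivity) hl
    ((continuousOn_termB hF x).intervalIntegrable_of_Icc (μ := volume) hx.1)]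
  · refine integral_congr fun y hy => ?_
    rw [uIcc_of_le hl] at hy
    have h₁ : 1/2 ≤ y := (le_max_left _ _).trans hy.1
    have h₂ : 2*x - 1 ≤ y := (le_max_right _ _).trans hy.1
    rw [termB, show τ y = (1 - y) / 2 from min_eq_left (by linarith), max_eq_left (by linarith),
      coefB, max_eq_left (by linarith)]
    congr 1
    ring
  · intro y ⟨hy0, hyl⟩
    rcases le_max_iff.1 hyl with h | h
    · exact termB_eq_zero hn x h
    · rw [termB, max_eq_right (by linarith [τ_le_one_sub_div_two y]), integral_same]

theorem integral_fA_sub_terms (hn : 3 ≤ n) (hF : ContinuousOn F (Icc 0 1)) {x : ℝ}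
    (hx : x ∈ Icc 0 1) :
    ∫ y in (0:ℝ)..x, (fA n y - termA n F x y - termD n F x y + termB n F x y)
      = FA n x
        - (∫ y in (max (2*x - 1) 0)..x, ∫ z in (0:ℝ)..((1 + y)/2 - x),
            2 * (n:ℝ) * ((n:ℝ) - 1) * y ^ (n-2) * F z)
        - (∫ y in (max (max (x - 1/4) 0) (2*x - 1))..x,
            ∫ z in (0:ℝ)..(min (1/4 + y - x) ((1 + y)/2 - x)),
              2 * (n:ℝ) * ((n:ℝ) - 1) * (max (3*y - 2*x - 2*z) 0) ^ (n-2) * F z)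
        + (∫ y in (max (1/2 : ℝ) (2*x - 1))..(max (1/2 : ℝ) x),
            ∫ z in (0:ℝ)..((1 + y)/2 - x),
              4 * (n:ℝ) * ((n:ℝ) - 1) * (2*y - 1) ^ (n-2) * F z) := by
  have hfA : IntervalIntegrable (fA n) volume 0 x :=
    (by unfold fA; fun_prop : Continuous (fA n)).intervalIntegrable _ _
  have hA := (continuousOn_termA (n := n) hF x).intervalIntegrable_of_Icc (μ := volume) hx.1
  have hD := (continuousOn_termD (n := n) hF x).intervalIntegrable_of_Icc (μ := volume) hx.1
  have hB := (continuousOn_termB (n := n) hF x).intervalIntegrable_of_Icc (μ := volume) hx.1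
  rw [integral_add ((hfA.sub hA).sub hD) hB, integral_sub (hfA.sub hA) hD, integral_sub hfA hA,
    integral_fA hn, integral_termA hF hx, integral_termD hF hx, integral_termB hn hF hx]

end Carousel

theorem stmt_11_general (n : ℕ) (hn : 3 ≤ n)
    (fA FA : ℝ → ℝ) (G : ℝ → ℝ → ℝ)
    (hfA : ∀ y : ℝ, fA y
      = (n:ℝ) * y ^ (n-2) * (y + ((n:ℝ) - 1) * (1 - y))
        - (n:ℝ) * (max (2*y - 1) 0) ^ (n-2) * (2 * ((n:ℝ) - 1) * (1 - y) + 2*y - 1))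
    (hFA : ∀ x : ℝ, FA x
      = 2 * x ^ n + (n:ℝ) * x ^ (n-1) * (1 - x)
        - (max (2*x - 1) 0) ^ n - (n:ℝ) * (max (2*x - 1) 0) ^ (n-1) * (1 - x))
    (hG1 : ∀ y ∈ Icc (0:ℝ) 1, ∀ t : ℝ, 0 ≤ t → t ≤ min ((1 - y)/2) (1/4) →
      G t y = 2 * (n:ℝ) * ((n:ℝ) - 1) * y ^ (n-2) * t
        - (n:ℝ) * (max (y - 2*t) 0) ^ (n-1) + (n:ℝ) * y ^ (n-1)
        - 4 * (n:ℝ) * ((n:ℝ) - 1) * (max (2*y - 1) 0) ^ (n-2) * t)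
    (hG2 : ∀ y ∈ Icc (0:ℝ) 1, ∀ t : ℝ, 1/4 ≤ t → t ≤ (1 - y)/2 →
      G t y = 2 * (n:ℝ) * ((n:ℝ) - 1) * y ^ (n-2) * t + (n:ℝ) * y ^ (n-1))
    (hG3 : ∀ y ∈ Icc (0:ℝ) 1, ∀ t : ℝ, (1 - y)/2 ≤ t → G t y = fA y)
    (f : ℝ → ℝ)
    (hfi : MeasureTheory.IntegrableOn f (Icc (0:ℝ) 1))
    (hf1 : (∫ z in (0:ℝ)..1, f z) = 1)
    (F : ℝ → ℝ) (hF : ∀ t : ℝ, F t = ∫ z in (0:ℝ)..t, f z)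
    (x : ℝ) (hx : x ∈ Icc (0:ℝ) 1) :
    (∫ y in (0:ℝ)..x, ∫ z in (0:ℝ)..1, G (x - y + z) y * f z)
      = FA x
        - (∫ y in (max (2*x - 1) 0)..x, ∫ z in (0:ℝ)..((1 + y)/2 - x),
            2 * (n:ℝ) * ((n:ℝ) - 1) * y ^ (n-2) * F z)
        - (∫ y in (max (max (x - 1/4) 0) (2*x - 1))..x,
            ∫ z in (0:ℝ)..(min (1/4 + y - x) ((1 + y)/2 - x)),
              2 * (n:ℝ) * ((n:ℝ) - 1) * (max (3*y - 2*x - 2*z) 0) ^ (n-2) * F z)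
        + (∫ y in (max (1/2 : ℝ) (2*x - 1))..(max (1/2 : ℝ) x),
            ∫ z in (0:ℝ)..((1 + y)/2 - x),
              4 * (n:ℝ) * ((n:ℝ) - 1) * (2*y - 1) ^ (n-2) * F z) := by
  obtain rfl : fA = Carousel.fA n := funext hfA
  obtain rfl : FA = Carousel.FA n := funext hFA
  have hf : IntervalIntegrable f volume 0 1 :=
    (intervalIntegrable_iff_integrableOn_Icc_of_le zero_le_one).2 hfi
  have hFc : ContinuousOn F (Icc 0 1) :=
    (uIcc_of_le (zero_le_one' ℝ) ▸ continuousOn_primitive_interval' hf left_mem_uIcc).congr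
      fun t _ => hF t
  have hG : ∀ y ∈ Icc (0:ℝ) 1, ∀ t, 0 ≤ t → G t y = Carousel.G n y t := by
    intro y hy t ht
    rcases le_or_gt t (Carousel.τ y) with h₁ | h₁
    · rw [hG1 y hy t ht h₁, Carousel.G_eq_of_le_τ h₁]
    rcases le_total t ((1 - y) / 2) with h₂ | h₂
    · have h₃ : 1 / 4 ≤ t := by
        rcases min_lt_iff.1 h₁ with h | h <;> linarith
      rw [hG2 y hy t h₃ h₂, Carousel.G_eq_of_quarter_le hn h₃ h₂]
    · rw [hG3 y hy t h₂, Carousel.G_eq_fA hn h₂]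
  rw [← Carousel.integral_fA_sub_terms hn hFc hx]
  refine integral_congr fun y hy => ?_
  rw [uIcc_of_le hx.1] at hy
  rw [← Carousel.integral_G_sub_add_mul hn hf hf1 hF hFc hy.1 hy.2]
  exact integral_congr fun z hz => by
    rw [uIcc_of_le zero_le_one] at hz
    rw [hG y ⟨hy.1, hy.2.trans hx.2⟩ _ (by linarith [hy.2, hz.1])]

theorem stmt_11 (n : ℕ) (hn : 3 ≤ n)
    (fA FA : ℝ → ℝ) (G : ℝ → ℝ → ℝ)
    (hfA : ∀ y : ℝ, fA y
      = (n:ℝ) * y ^ (n-2) * (y + ((n:ℝ) - 1) * (1 - y))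
        - (n:ℝ) * (max (2*y - 1) 0) ^ (n-2) * (2 * ((n:ℝ) - 1) * (1 - y) + 2*y - 1))
    (hFA : ∀ x : ℝ, FA x
      = 2 * x ^ n + (n:ℝ) * x ^ (n-1) * (1 - x)
        - (max (2*x - 1) 0) ^ n - (n:ℝ) * (max (2*x - 1) 0) ^ (n-1) * (1 - x))
    (hG1 : ∀ y ∈ Icc (0:ℝ) 1, ∀ t : ℝ, 0 ≤ t → t ≤ min ((1 - y)/2) (1/4) →
      G t y = 2 * (n:ℝ) * ((n:ℝ) - 1) * y ^ (n-2) * t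
        - (n:ℝ) * (max (y - 2*t) 0) ^ (n-1) + (n:ℝ) * y ^ (n-1)
        - 4 * (n:ℝ) * ((n:ℝ) - 1) * (max (2*y - 1) 0) ^ (n-2) * t)
    (hG2 : ∀ y ∈ Icc (0:ℝ) 1, ∀ t : ℝ, 1/4 ≤ t → t ≤ (1 - y)/2 →
      G t y = 2 * (n:ℝ) * ((n:ℝ) - 1) * y ^ (n-2) * t + (n:ℝ) * y ^ (n-1))
    (hG3 : ∀ y ∈ Icc (0:ℝ) 1, ∀ t : ℝ, (1 - y)/2 ≤ t → G t y = fA y)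
    (f : ℝ → ℝ)
    (hf0 : ∀ z ∈ Icc (0:ℝ) 1, 0 ≤ f z)
    (hfi : MeasureTheory.IntegrableOn f (Icc (0:ℝ) 1))
    (hf1 : (∫ z in (0:ℝ)..1, f z) = 1)
    (F : ℝ → ℝ) (hF : ∀ t : ℝ, F t = ∫ z in (0:ℝ)..t, f z)
    (x : ℝ) (hx : x ∈ Icc (0:ℝ) 1) :
    (∫ y in (0:ℝ)..x, ∫ z in (0:ℝ)..1, G (x - y + z) y * f z)
      = FA x
        - (∫ y in (max (2*x - 1) 0)..x, ∫ z in (0:ℝ)..((1 + y)/2 - x),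
            2 * (n:ℝ) * ((n:ℝ) - 1) * y ^ (n-2) * F z)
        - (∫ y in (max (max (x - 1/4) 0) (2*x - 1))..x,
            ∫ z in (0:ℝ)..(min (1/4 + y - x) ((1 + y)/2 - x)),
              2 * (n:ℝ) * ((n:ℝ) - 1) * (max (3*y - 2*x - 2*z) 0) ^ (n-2) * F z)
        + (∫ y in (max (1/2 : ℝ) (2*x - 1))..(max (1/2 : ℝ) x),
            ∫ z in (0:ℝ)..((1 + y)/2 - x),
              4 * (n:ℝ) * ((n:ℝ) - 1) * (2*y - 1) ^ (n-2) * F z) :=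
  stmt_11_general n hn fA FA G hfA hFA hG1 hG2 hG3 f hfi hf1 F hF x hx
end
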